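/- Let G = (V, E) be a finite directed graph and D_G the automaton constructed from G. Then the regular reachability objective Reach(L(D_G)) is M_triv-progress-consistent: for all finite words w₁, w₂ over the alphabet of D_G, if w₁ ≺ w₁w₂ for the prefix preorder of Reach(L(D_G)), then w₁(w₂)^ω ∈ Reach(L(D_G)). -/

import Mathlib

set_option autoImplicit false

namespace RegularMemory

/-- Concatenation of a finite word with an infinite word. -/
def wcat {C : Type} (w : List C) (x : ℕ → C) : ℕ → C := fun n =>
  if h : n < w.length then w.get ⟨n, h⟩ else x (n - w.length)

/-- The infinite word `w^ω` (junk value if `w` is empty). -/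
noncomputable def wpow {C : Type} [Nonempty C] : List C → ℕ → C
  | [] => fun _ => Classical.arbitrary C
  | (a :: l) => fun n => (a :: l).get ⟨n % (a :: l).length, Nat.mod_lt n (Nat.succ_pos _)⟩

/-- Winning continuations `w⁻¹W` of the finite word `w` for the objective `W`. -/
def contAfter {C : Type} (W : Set (ℕ → C)) (w : List C) : Set (ℕ → C) :=
  {x | wcat w x ∈ W}

/-- Prefix preorder `w₁ ⪯_W w₂`. -/
def prefLe {C : Type} (W : Set (ℕ → C)) (w₁ w₂ : List C) : Prop :=
  contAfter W w₁ ⊆ contAfter W w₂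

/-- Strict prefix relation `w₁ ≺_W w₂`. -/
def prefLt {C : Type} (W : Set (ℕ → C)) (w₁ w₂ : List C) : Prop :=
  prefLe W w₁ w₂ ∧ ¬ prefLe W w₂ w₁

/-- Comparability for the prefix preorder. -/
def PrefComparable {C : Type} (W : Set (ℕ → C)) (w₁ w₂ : List C) : Prop :=
  prefLe W w₁ w₂ ∨ prefLe W w₂ w₁

/-- The general reachability objective derived from `A`: infinite words with a prefix in `A`. -/
def ReachObj {C : Type} (A : Set (List C)) : Set (ℕ → C) :=
  {x | ∃ n : ℕ, (List.ofFn fun i : Fin n => x i) ∈ A}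

/-- The general safety objective derived from `A`. -/
def SafeObj {C : Type} (A : Set (List C)) : Set (ℕ → C) :=
  (ReachObj A)ᶜ

/-- The prefix preorder of `W` has finitely many equivalence classes. -/
def FinClasses {C : Type} (W : Set (ℕ → C)) : Prop :=
  (Set.range fun w : List C => contAfter W w).Finite

/-- The prefix preorder of `W` is well-founded:
every nonempty chain contains a minimal element. -/
def PrefWellFounded {C : Type} (W : Set (ℕ → C)) : Prop :=
  ∀ S : Set (List C), S.Nonempty →
    (∀ w₁ ∈ S, ∀ w₂ ∈ S, PrefComparable W w₁ w₂) →
    ∃ w₀ ∈ S, ∀ w ∈ S, ¬ prefLt W w w₀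

/-- Chromatic memory structure. -/
structure MemStruct (C : Type) where
  M : Type
  init : M
  upd : M → C → M

/-- Extension of the update function to finite words. -/
def MemStruct.updStar {C : Type} (N : MemStruct C) (m : N.M) (w : List C) : N.M :=
  w.foldl N.upd m

/-- The trivial one-state memory structure. -/
def trivMem (C : Type) : MemStruct C :=
  ⟨Unit, (), fun _ _ => ()⟩

/-- `W` is `N`-strongly-monotone. -/
def StronglyMonotone {C : Type} (N : MemStruct C) (W : Set (ℕ → C)) : Prop :=
  ∀ w₁ w₂ : List C,
    N.updStar N.init w₁ = N.updStar N.init w₂ → PrefComparable W w₁ w₂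

/-- `W` is `N`-progress-consistent. -/
def ProgressConsistent {C : Type} [Nonempty C] (N : MemStruct C) (W : Set (ℕ → C)) : Prop :=
  ∀ (m : N.M) (w₁ w₂ : List C),
    N.updStar N.init w₁ = m → N.updStar m w₂ = m →
    prefLt W w₁ (w₁ ++ w₂) → wcat w₁ (wpow w₂) ∈ W

/-- Two-player arena with colored edges; Player-1 vertices have outgoing edges
(so that strategies of Player 1 exist). -/
structure Arena (C : Type) where
  V : Type
  P1 : V → Prop
  E : Set (V × C × V)
  succ : ∀ v : V, P1 v → ∃ e ∈ E, e.1 = v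

namespace Arena

/-- Valid histories starting at a given vertex. -/
def HistFrom {C : Type} (A : Arena C) : A.V → List (A.V × C × A.V) → Prop
  | _, [] => True
  | v, e :: l => e ∈ A.E ∧ e.1 = v ∧ HistFrom A e.2.2 l

/-- Endpoint of a history. -/
def endFrom {C : Type} (A : Arena C) : A.V → List (A.V × C × A.V) → A.V
  | v, [] => v
  | _, e :: l => endFrom A e.2.2 l

/-- Infinite plays from a vertex. -/
def PlayFrom {C : Type} (A : Arena C) (v : A.V) (π : ℕ → A.V × C × A.V) : Prop :=
  (π 0).1 = v ∧ ∀ n : ℕ, π n ∈ A.E ∧ (π n).2.2 = (π (n + 1)).1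

/-- Colors along a play. -/
def playCol {C V : Type} (π : ℕ → V × C × V) : ℕ → C :=
  fun n => (π n).2.1

/-- Strategies of Player 1: on every valid history ending in a Player-1 vertex,
the strategy picks an edge leaving that vertex. -/
structure Strategy {C : Type} (A : Arena C) where
  next : A.V → List (A.V × C × A.V) → A.V × C × A.V
  legal : ∀ (v : A.V) (l : List (A.V × C × A.V)),
    A.HistFrom v l → A.P1 (A.endFrom v l) →
      next v l ∈ A.E ∧ (next v l).1 = A.endFrom v l

/-- A play from `v` is consistent with the strategy `σ`. -/
def Strategy.Consistent {C : Type} {A : Arena C} (σ : A.Strategy) (v : A.V)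
    (π : ℕ → A.V × C × A.V) : Prop :=
  ∀ n : ℕ, A.P1 (A.endFrom v (List.ofFn fun i : Fin n => π i)) →
    π n = σ.next v (List.ofFn fun i : Fin n => π i)

/-- `σ` is winning from `v` for the objective `W`. -/
def Strategy.WinningFrom {C : Type} {A : Arena C} (σ : A.Strategy)
    (W : Set (ℕ → C)) (v : A.V) : Prop :=
  ∀ π : ℕ → A.V × C × A.V, A.PlayFrom v π → σ.Consistent v π → playCol π ∈ W

/-- `σ` is optimal in `(A, W)`: winning from every vertex from which
Player 1 has some winning strategy. -/
def Strategy.Optimal {C : Type} {A : Arena C} (σ : A.Strategy) (W : Set (ℕ → C)) : Prop :=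
  ∀ v : A.V, (∃ σ' : A.Strategy, σ'.WinningFrom W v) → σ.WinningFrom W v

/-- `σ` is based on the memory structure `N`. -/
def Strategy.BasedOn {C : Type} {A : Arena C} (σ : A.Strategy) (N : MemStruct C) : Prop :=
  ∃ nxt : A.V → N.M → A.V × C × A.V,
    ∀ (v : A.V) (l : List (A.V × C × A.V)),
      A.HistFrom v l → A.P1 (A.endFrom v l) →
        σ.next v l = nxt (A.endFrom v l) (N.updStar N.init (l.map fun e => e.2.1))

/-- Finite arena: finitely many vertices and edges. -/
def IsFinite {C : Type} (A : Arena C) : Prop := Finite A.V ∧ A.E.Finite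

/-- Finitely branching arena. -/
def FinBranching {C : Type} (A : Arena C) : Prop :=
  ∀ v : A.V, {e ∈ A.E | e.1 = v}.Finite

/-- One-player arena of Player 1. -/
def OneP1 {C : Type} (A : Arena C) : Prop := ∀ v : A.V, A.P1 v

end Arena

/-- `N` suffices to play optimally for `W` in all arenas of the class `P`. -/
def SufficesIn {C : Type} (N : MemStruct C) (W : Set (ℕ → C))
    (P : Arena C → Prop) : Prop :=
  ∀ A : Arena C, P A → ∃ σ : A.Strategy, σ.BasedOn N ∧ σ.Optimal W

/-- Deterministic automaton (with complete transition function). -/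
structure DetAuto (C : Type) where
  Q : Type
  init : Q
  δ : Q → C → Q
  F : Set Q

/-- Extension of the transition function to finite words. -/
def DetAuto.δStar {C : Type} (D : DetAuto C) (q : D.Q) (w : List C) : D.Q :=
  w.foldl D.δ q

/-- Language recognized by `D`. -/
def DetAuto.lang {C : Type} (D : DetAuto C) : Set (List C) :=
  {w | D.δStar D.init w ∈ D.F}

/-- Prefix preorder extended to automaton states. -/
def statePrefLe {C : Type} (D : DetAuto C) (W : Set (ℕ → C)) (q₁ q₂ : D.Q) : Prop :=
  ∀ w₁ w₂ : List C,
    D.δStar D.init w₁ = q₁ → D.δStar D.init w₂ = q₂ → prefLe W w₁ w₂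

def statePrefLt {C : Type} (D : DetAuto C) (W : Set (ℕ → C)) (q₁ q₂ : D.Q) : Prop :=
  statePrefLe D W q₁ q₂ ∧ ¬ statePrefLe D W q₂ q₁

def StateComparable {C : Type} (D : DetAuto C) (W : Set (ℕ → C)) (q₁ q₂ : D.Q) : Prop :=
  statePrefLe D W q₁ q₂ ∨ statePrefLe D W q₂ q₁

/-- Monotone decomposition of `D` with `k` sets. -/
def MonotoneDecomposition {C : Type} (D : DetAuto C) (W : Set (ℕ → C))
    {k : ℕ} (Γ : Fin k → Set D.Q) : Prop :=
  (∀ q : D.Q, ∃ i : Fin k, q ∈ Γ i) ∧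
  (∀ (c : C) (i : Fin k), ∃ j : Fin k, (fun q => D.δ q c) '' Γ i ⊆ Γ j) ∧
  (∀ i : Fin k, ∀ q₁ ∈ Γ i, ∀ q₂ ∈ Γ i, StateComparable D W q₁ q₂)

end RegularMemory

namespace RegularMemory

/-- Vertex and edge states coming from the cycle graph `C_n` (`vc`, `ec`)
and from the graph `G` (`vg`, `eg`). -/
inductive ZKind (n : ℕ) (Ed : Finset (Fin n × Fin n)) : Type
  | vc (i : Fin n)
  | ec (i : Fin n)
  | vg (v : Fin n)
  | eg (e : Fin n × Fin n) (he : e ∈ Ed)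

/-- States of the automaton `D_G`. -/
inductive DGState (n : ℕ) (Ed : Finset (Fin n × Fin n)) : Type
  | base (z : ZKind n Ed)
  | qinit
  | bot
  | top

/-- Alphabet of the automaton `D_G`: letters `in`, `out`, and one letter `a_z`
for each vertex/edge state `z`. -/
inductive DGAlpha (n : ℕ) (Ed : Finset (Fin n × Fin n)) : Type
  | inL
  | outL
  | az (z : ZKind n Ed)

instance (n : ℕ) (Ed : Finset (Fin n × Fin n)) : Nonempty (DGAlpha n Ed) :=
  ⟨DGAlpha.inL⟩

/-- Cyclic successor in `Fin n`. -/
def finSucc {n : ℕ} (i : Fin n) : Fin n :=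
  ⟨(i.val + 1) % n, Nat.mod_lt _ i.pos⟩

/-- Target of the transition reading letter `a_{z'}` from the state `z`. -/
def azTarget {n : ℕ} {Ed : Finset (Fin n × Fin n)} (z z' : ZKind n Ed) : DGState n Ed :=
  match z, z' with
  | .vc i, .vc j => if i = j then .top else .bot
  | .ec i, .ec j => if i = j then .top else .bot
  | .vg v, .vg w => if v = w then .top else .bot
  | .vg _, .vc _ => .top
  | .eg e _, .eg e' _ => if e = e' then .top else .bot
  | .eg _ _, .ec _ => .top
  | _, _ => .bot

/-- Transition function of the automaton `D_G`. -/
def DGdelta {n : ℕ} {Ed : Finset (Fin n × Fin n)} :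
    DGState n Ed → DGAlpha n Ed → DGState n Ed
  | .base (.vc i), .inL => .base (.vc i)
  | .base (.vc i), .outL => .base (.vc i)
  | .base (.ec i), .inL => .base (.vc i)
  | .base (.ec i), .outL => .base (.vc (finSucc i))
  | .base (.vg v), .inL => .base (.vg v)
  | .base (.vg v), .outL => .base (.vg v)
  | .base (.eg e _), .inL => .base (.vg e.1)
  | .base (.eg e _), .outL => .base (.vg e.2)
  | .base z, .az z' => azTarget z z'
  | .qinit, .inL => .qinit
  | .qinit, .outL => .qinit
  | .qinit, .az z => .base z
  | .bot, _ => .bot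
  | .top, _ => .top

/-- The automaton `D_G` built from the graph `G = (Fin n, Ed)`. -/
def DG (n : ℕ) (Ed : Finset (Fin n × Fin n)) : DetAuto (DGAlpha n Ed) where
  Q := DGState n Ed
  init := DGState.qinit
  δ := DGdelta
  F := {DGState.top}

/-- `G = (Fin n, Ed)` has a Hamiltonian cycle. -/
def HasHamiltonianCycle (n : ℕ) (Ed : Finset (Fin n × Fin n)) : Prop :=
  ∃ u : Fin n → Fin n, Function.Bijective u ∧ ∀ i : Fin n, (u i, u (finSucc i)) ∈ Ed

end RegularMemory

namespace RegularMemory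

/-!
Winning continuations of a word depend only on the state of `D_G` it leads to, and constant
words `a_y^ω` tell a state apart from every other non-accepting state it leads to: `a_y^ω` wins
from `q_init` for every `y`, but for a suitable `y` it loses from any given vertex or edge state
`z'`, and from `⊥`; and `a_z^ω` wins from `z` but loses from every `z' ≠ z` that `z` reaches with
`in`/`out` letters. Hence `w₁ ⪯ w₁w₂` forces `w₂` to lead from `δ*(w₁)` back to itself or to `⊤`;
strictness excludes the former, and then `w₁w₂ ∈ L(D_G)` is a prefix of `w₁(w₂)^ω`.
-/

section Words

variable {C : Type}

theorem ofFn_wcat (w : List C) (x : ℕ → C) (m : ℕ) :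
    (List.ofFn fun i : Fin (w.length + m) => wcat w x i) =
      w ++ List.ofFn fun i : Fin m => x i := by
  apply List.ext_getElem (by simp)
  intro i _ _
  by_cases h : i < w.length
  · simp [wcat, h, List.getElem_append_left h]
  · simp [wcat, h, List.getElem_append_right (Nat.le_of_not_lt h)]

theorem ofFn_wcat_of_le (w : List C) (x : ℕ → C) {m : ℕ} (h : m ≤ w.length) :
    (List.ofFn fun i : Fin m => wcat w x i) = w.take m := by
  apply List.ext_getElem (by simp [h])
  intro i hi _
  have hiw : i < w.length := lt_of_lt_of_le (by simpa using hi) h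
  simp [wcat, hiw]

theorem ofFn_wpow_length [Nonempty C] {w : List C} (hw : w ≠ []) :
    (List.ofFn fun i : Fin w.length => wpow w i) = w := by
  obtain ⟨a, l, rfl⟩ := List.exists_cons_of_ne_nil hw
  apply List.ext_getElem (by simp)
  intro i _ hi
  rw [List.getElem_ofFn]
  show (a :: l).get ⟨i % (a :: l).length, _⟩ = _
  simp only [List.get_eq_getElem, Nat.mod_eq_of_lt hi]

theorem wcat_wpow_mem_reachObj [Nonempty C] {A : Set (List C)} {w₁ w₂ : List C}
    (hA : w₁ ++ w₂ ∈ A) (hw₂ : w₂ ≠ []) : wcat w₁ (wpow w₂) ∈ ReachObj A :=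
  ⟨w₁.length + w₂.length, by rwa [ofFn_wcat, ofFn_wpow_length hw₂]⟩

end Words

namespace DetAuto

variable {C : Type} (D : DetAuto C)

def acceptsFrom (q : D.Q) : Set (ℕ → C) :=
  {x | ∃ m : ℕ, D.δStar q (List.ofFn fun i : Fin m => x i) ∈ D.F}

theorem δStar_append (q : D.Q) (u v : List C) :
    D.δStar q (u ++ v) = D.δStar (D.δStar q u) v :=
  List.foldl_append

theorem δStar_mem_of_forall_δ_mem {S : Set D.Q} (hS : ∀ q ∈ S, ∀ c, D.δ q c ∈ S)
    {q : D.Q} (hq : q ∈ S) (w : List C) : D.δStar q w ∈ S := by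
  induction w generalizing q with
  | nil => exact hq
  | cons c w ih => exact ih (hS q hq c)

theorem contAfter_reachObj_lang (hF : ∀ q ∈ D.F, ∀ c, D.δ q c ∈ D.F) (w : List C) :
    contAfter (ReachObj D.lang) w = D.acceptsFrom (D.δStar D.init w) := by
  ext x
  constructor
  · rintro ⟨m, hm⟩
    rcases le_or_gt m w.length with h | h
    · refine ⟨0, ?_⟩
      rw [ofFn_wcat_of_le w x h] at hm
      have := D.δStar_mem_of_forall_δ_mem hF hm (w.drop m)
      rwa [← δStar_append, List.take_append_drop] at this
    · obtain ⟨k, rfl⟩ := Nat.exists_eq_add_of_lt h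
      refine ⟨k + 1, ?_⟩
      rw [← δStar_append, ← ofFn_wcat]
      exact hm
  · rintro ⟨m, hm⟩
    refine ⟨w.length + m, ?_⟩
    show D.δStar D.init _ ∈ D.F
    rwa [ofFn_wcat, δStar_append]

theorem const_mem_acceptsFrom_iff (q : D.Q) (c : C) :
    (fun _ => c) ∈ D.acceptsFrom q ↔ q ∈ D.F ∨ (fun _ => c) ∈ D.acceptsFrom (D.δ q c) := by
  simp only [acceptsFrom, Set.mem_ofPred_eq, List.ofFn_const]
  constructor
  · rintro ⟨_ | m, hm⟩
    · exact Or.inl hm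
    · exact Or.inr ⟨m, hm⟩
  · rintro (hq | ⟨m, hm⟩)
    · exact ⟨0, hq⟩
    · exact ⟨m + 1, hm⟩

end DetAuto

section Automaton

variable {n : ℕ} {Ed : Finset (Fin n × Fin n)}

open DGState DGAlpha

theorem azTarget_self (z : ZKind n Ed) : azTarget z z = top := by
  cases z <;> simp [azTarget]

theorem azTarget_eq_top_or_eq_bot (z z' : ZKind n Ed) :
    azTarget z z' = top ∨ azTarget z z' = bot := by
  cases z <;> cases z' <;> simp only [azTarget] <;> (try split) <;> simp

def killingLetter : ZKind n Ed → ZKind n Ed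
  | .vc i => .ec i
  | .ec i => .vc i
  | .vg v => .ec v
  | .eg e _ => .vc e.1

theorem azTarget_killingLetter (z : ZKind n Ed) : azTarget z (killingLetter z) = bot := by
  cases z <;> rfl

/-- An over-approximation of the states reachable from `z` by the letters `in` and `out`. -/
def InOutReach : ZKind n Ed → ZKind n Ed → Prop
  | .vc i, .vc j => i = j
  | .ec i, .ec j => i = j
  | .ec _, .vc _ => True
  | .vg v, .vg w => v = w
  | .eg e _, .eg e' _ => e = e'
  | .eg _ _, .vg _ => True
  | _, _ => False

theorem InOutReach.refl (z : ZKind n Ed) : InOutReach z z := by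
  cases z <;> simp [InOutReach]

theorem InOutReach.azTarget_eq_bot {z z' : ZKind n Ed} (h : InOutReach z z') (hne : z' ≠ z) :
    azTarget z' z = bot := by
  cases z <;> cases z' <;> simp only [InOutReach] at h <;>
    first
      | rfl
      | (subst h; exact absurd rfl hne)

theorem DG_top_absorbing : ∀ q ∈ (DG n Ed).F, ∀ c, (DG n Ed).δ q c ∈ (DG n Ed).F := by
  rintro q rfl c
  cases c <;> rfl

theorem DG_δStar_top (w : List (DGAlpha n Ed)) : (DG n Ed).δStar top w = top :=
  (DG n Ed).δStar_mem_of_forall_δ_mem DG_top_absorbing rfl w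

theorem DG_δStar_bot (w : List (DGAlpha n Ed)) : (DG n Ed).δStar bot w = bot :=
  (DG n Ed).δStar_mem_of_forall_δ_mem (S := {bot}) (by rintro q rfl c; cases c <;> rfl) rfl w

theorem DG_acceptsFrom_bot : (DG n Ed).acceptsFrom bot = ∅ := by
  ext x
  simp only [DetAuto.acceptsFrom, Set.mem_ofPred_eq, DG_δStar_bot, Set.mem_empty_iff_false,
    iff_false, not_exists]
  intro _ h
  cases h

theorem DG_const_az_mem_acceptsFrom_base_iff (z y : ZKind n Ed) :
    (fun _ => az y) ∈ (DG n Ed).acceptsFrom (base z) ↔ azTarget z y = top := by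
  refine ((DG n Ed).const_mem_acceptsFrom_iff (base z) (az y)).trans ?_
  have hδ : (DG n Ed).δ (base z) (az y) = azTarget z y := by cases z <;> rfl
  rcases azTarget_eq_top_or_eq_bot z y with h | h <;> rw [hδ, h]
  · exact iff_of_true (Or.inr ⟨0, rfl⟩) rfl
  · refine iff_of_false ?_ (by simp)
    rintro (h | h)
    · cases h
    · exact (DG_acceptsFrom_bot.subset h : _)

theorem DG_const_az_mem_acceptsFrom_qinit (y : ZKind n Ed) :
    (fun _ => az y) ∈ (DG n Ed).acceptsFrom qinit :=
  ((DG n Ed).const_mem_acceptsFrom_iff _ _).2 <|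
    Or.inr ((DG_const_az_mem_acceptsFrom_base_iff y y).2 (azTarget_self y))

theorem DG_δStar_qinit_eq_or_nonempty (w : List (DGAlpha n Ed)) :
    (DG n Ed).δStar qinit w = qinit ∨ Nonempty (ZKind n Ed) :=
  (DG n Ed).δStar_mem_of_forall_δ_mem (S := {q | q = qinit ∨ Nonempty (ZKind n Ed)})
    (by
      rintro q (rfl | h) c
      · cases c with
        | az z => exact Or.inr ⟨z⟩
        | _ => exact Or.inl rfl
      · exact Or.inr h)
    (Or.inl rfl) w

theorem DG_δStar_base (z : ZKind n Ed) (w : List (DGAlpha n Ed)) :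
    (DG n Ed).δStar (base z) w = top ∨ (DG n Ed).δStar (base z) w = bot ∨
      ∃ z', InOutReach z z' ∧ (DG n Ed).δStar (base z) w = base z' := by
  refine (DG n Ed).δStar_mem_of_forall_δ_mem
    (S := {q | q = top ∨ q = bot ∨ ∃ z', InOutReach z z' ∧ q = base z'}) ?_
    (Or.inr (Or.inr ⟨z, InOutReach.refl z, rfl⟩)) w
  rintro q (rfl | rfl | ⟨z', hz', rfl⟩) c
  · cases c <;> exact Or.inl rfl
  · cases c <;> exact Or.inr (Or.inl rfl)
  · cases c with
    | az y =>
      have hδ : (DG n Ed).δ (base z') (az y) = azTarget z' y := by cases z' <;> rfl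
      rw [hδ]
      exact (azTarget_eq_top_or_eq_bot z' y).imp id Or.inl
    | _ =>
      refine Or.inr (Or.inr ?_)
      cases z <;> cases z' <;> simp_all [InOutReach, DG, DGdelta]

theorem DG_const_az_not_mem_acceptsFrom_base {z y : ZKind n Ed} (h : azTarget z y = bot) :
    (fun _ => az y) ∉ (DG n Ed).acceptsFrom (base z) := by
  rw [DG_const_az_mem_acceptsFrom_base_iff, h]
  exact nofun

theorem DG_δStar_eq_or_eq_top_of_acceptsFrom_subset (q : DGState n Ed) (w : List (DGAlpha n Ed))
    (h : (DG n Ed).acceptsFrom q ⊆ (DG n Ed).acceptsFrom ((DG n Ed).δStar q w)) :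
    (DG n Ed).δStar q w = q ∨ (DG n Ed).δStar q w = top := by
  cases q with
  | top => exact Or.inr (DG_δStar_top w)
  | bot => exact Or.inl (DG_δStar_bot w)
  | qinit =>
    rcases DG_δStar_qinit_eq_or_nonempty w with hq | hz
    · exact Or.inl hq
    obtain ⟨z⟩ := hz
    generalize (DG n Ed).δStar qinit w = q' at h ⊢
    cases q' with
    | base z' =>
      exact absurd (h (DG_const_az_mem_acceptsFrom_qinit (killingLetter z')))
        (DG_const_az_not_mem_acceptsFrom_base (azTarget_killingLetter z'))
    | qinit => exact Or.inl rfl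
    | bot => exact (DG_acceptsFrom_bot.subset (h (DG_const_az_mem_acceptsFrom_qinit z))).elim
    | top => exact Or.inr rfl
  | base z =>
    have hz := h ((DG_const_az_mem_acceptsFrom_base_iff z z).2 (azTarget_self z))
    rcases DG_δStar_base z w with hq | hq | ⟨z', hz', hq⟩ <;> rw [hq] at hz ⊢
    · exact Or.inr rfl
    · exact (DG_acceptsFrom_bot.subset hz).elim
    · by_cases hne : z' = z
      · exact Or.inl (hne ▸ rfl)
      · exact absurd hz (DG_const_az_not_mem_acceptsFrom_base (hz'.azTarget_eq_bot hne))

end Automaton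

/-- the regular reachability objective `Reach(L(D_G))` is
`M_triv`-progress-consistent. -/
theorem DG_trivial_progressConsistent (n : ℕ) (Ed : Finset (Fin n × Fin n)) :
    ∀ w₁ w₂ : List (DGAlpha n Ed),
      prefLt (ReachObj (DG n Ed).lang) w₁ (w₁ ++ w₂) →
        wcat w₁ (wpow w₂) ∈ ReachObj (DG n Ed).lang := by
  intro w₁ w₂ ⟨hle, hnle⟩
  simp only [prefLe, (DG n Ed).contAfter_reachObj_lang DG_top_absorbing,
    DetAuto.δStar_append] at hle hnle
  have hne : (DG n Ed).δStar ((DG n Ed).δStar (DG n Ed).init w₁) w₂ ≠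
      (DG n Ed).δStar (DG n Ed).init w₁ := fun h => hnle (by rw [h])
  have hw₂ : w₂ ≠ [] := by
    rintro rfl
    exact hne rfl
  have htop := (DG_δStar_eq_or_eq_top_of_acceptsFrom_subset _ w₂ hle).resolve_left hne
  exact wcat_wpow_mem_reachObj (by rwa [DetAuto.lang, Set.mem_ofPred_eq, DetAuto.δStar_append]) hw₂

end RegularMemory
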